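/- (General weight construction, Appendix B: unbiasedness at the matching latent value.) Let n ≥ 2, fix i ∈ {1,…,n}, and let (Ω, F, ν) be a probability space (the conditional law given Y = y_i). For each j ≠ i let h_j, g_j, f_j : Ω → ℝ be integrable random variables and let H_j^i ≠ H_j^j, G_j^i ≠ G_j^j, F_j^i ≠ F_j^j be real numbers. Suppose the 3(n−1) random variables {h_j, g_j, f_j : j ≠ i} are mutually independent under ν, with ∫ h_j dν = H_j^i, ∫ g_j dν = G_j^i, ∫ f_j dν = F_j^i for all j ≠ i. Then ω_i is integrable with ∫ ω_i dν = 1. -/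

import Mathlib

open MeasureTheory ProbabilityTheory Finset

lemma my_iIndepFun_ae_eq {Ω ι : Type*} [MeasurableSpace Ω] {ν : Measure Ω}
    {f g : ι → Ω → ℝ} (hf : iIndepFun f ν)
    (hfg : ∀ i, f i =ᵐ[ν] g i) : iIndepFun g ν := by
  rw [iIndepFun_iff_measure_inter_preimage_eq_mul] at hf ⊢
  intro S sets hsets
  have h1 : ∀ i ∈ (S : Set ι), (g i ⁻¹' sets i : Set Ω) =ᵐ[ν] (f i ⁻¹' sets i) := by
    intro i _
    filter_upwards [hfg i] with x hx
    show (g i x ∈ sets i) = (f i x ∈ sets i)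
    rw [hx]
  have hB : (⋂ i ∈ S, g i ⁻¹' sets i : Set Ω) =ᵐ[ν] (⋂ i ∈ S, f i ⁻¹' sets i) := by
    simpa using EventuallyEq.countable_bInter S.countable_toSet h1
  rw [measure_congr hB, hf S hsets]
  exact Finset.prod_congr rfl fun i hi => (measure_congr (h1 i hi)).symm

lemma my_indep_prod_integrable {Ω ι : Type*} [MeasurableSpace Ω] {ν : Measure Ω}
    [IsProbabilityMeasure ν] {X : ι → Ω → ℝ}
    (hindep : iIndepFun X ν)
    (hmeas : ∀ i, Measurable (X i)) (hint : ∀ i, Integrable (X i) ν)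
    (s : Finset ι) :
    Integrable (∏ j ∈ s, X j) ν ∧ ∫ x, (∏ j ∈ s, X j) x ∂ν = ∏ j ∈ s, ∫ x, X j x ∂ν := by
  classical
  induction s using Finset.induction with
  | empty =>
    refine ⟨?_, by simp⟩
    rw [Finset.prod_empty]
    exact integrable_const 1
  | @insert a s ha ih =>
    have hInd : IndepFun (∏ j ∈ s, X j) (X a) ν :=
      iIndepFun.indepFun_finset_prod_of_notMem hindep hmeas ha
    have hint' : Integrable ((∏ j ∈ s, X j) * X a) ν := hInd.integrable_mul ih.1 (hint a)
    have hcomm : X a * (∏ j ∈ s, X j) = (∏ j ∈ s, X j) * X a := mul_comm _ _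
    rw [Finset.prod_insert ha, Finset.prod_insert ha, hcomm]
    refine ⟨hint', ?_⟩
    have := hInd.integral_mul_eq_mul_integral ih.1.aestronglyMeasurable (hint a).aestronglyMeasurable
    rw [show (∫ x, ((∏ j ∈ s, X j) * X a) x ∂ν) = ∫ x, ((∏ j ∈ s, X j) * X a) x ∂ν from rfl]
    calc ∫ x, ((∏ j ∈ s, X j) * X a) x ∂ν
        = (∫ x, (∏ j ∈ s, X j) x ∂ν) * ∫ x, X a x ∂ν := this
      _ = (∏ j ∈ s, ∫ x, X j x ∂ν) * ∫ x, X a x ∂ν := by rw [ih.2]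
      _ = (∫ x, X a x ∂ν) * ∏ j ∈ s, ∫ x, X j x ∂ν := mul_comm _ _

lemma my_main_aux {Ω ι : Type*} [MeasurableSpace Ω] {ν : Measure Ω} [IsProbabilityMeasure ν]
    {B : ι → Ω → ℝ} (d c : ι → ℝ)
    (hBint : ∀ jk, Integrable (B jk) ν)
    (hindep : iIndepFun B ν)
    (hc : ∀ jk, c jk ≠ 0)
    (hmean : ∀ jk, ∫ x, B jk x ∂ν = d jk + c jk)
    (T : Finset ι) :
    ∃ P : Ω → ℝ, Integrable P ν ∧ (∫ x, P x ∂ν = 1) ∧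
      ∀ᵐ x ∂ν, P x = ∏ jk ∈ T, (B jk x - d jk) / c jk := by
  classical
  set M : ι → Ω → ℝ := fun jk => (hBint jk).aemeasurable.mk (B jk) with hM
  have hMeas : ∀ jk, Measurable (M jk) := fun jk => (hBint jk).aemeasurable.measurable_mk
  have hMeq : ∀ jk, B jk =ᵐ[ν] M jk := fun jk => (hBint jk).aemeasurable.ae_eq_mk
  set X : ι → Ω → ℝ := fun jk x => (M jk x - d jk) / c jk with hXdef
  have hXmeas : ∀ jk, Measurable (X jk) :=
    fun jk => ((hMeas jk).sub measurable_const).div_const _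
  have hMint : ∀ jk, Integrable (M jk) ν := fun jk => (hBint jk).congr (hMeq jk)
  have hXint : ∀ jk, Integrable (X jk) ν :=
    fun jk => ((hMint jk).sub (integrable_const _)).div_const _
  have hMindep : iIndepFun M ν :=
    my_iIndepFun_ae_eq hindep hMeq
  have hXindep : iIndepFun X ν := by
    have := hMindep.comp (fun jk (t : ℝ) => (t - d jk) / c jk)
      (fun jk => (measurable_id.sub measurable_const).div_const _)
    exact this
  have hXmean : ∀ jk, ∫ x, X jk x ∂ν = 1 := by
    intro jk
    have h1 : ∫ x, M jk x ∂ν = d jk + c jk := by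
      rw [← integral_congr_ae (hMeq jk), hmean jk]
    have h2 : ∫ x, (M jk x - d jk) ∂ν = c jk := by
      rw [integral_sub (hMint jk) (integrable_const _), h1, integral_const]
      simp
    calc ∫ x, (M jk x - d jk) / c jk ∂ν = (∫ x, (M jk x - d jk) ∂ν) / c jk :=
          integral_div _ _
      _ = 1 := by rw [h2, div_self (hc jk)]
  obtain ⟨hPint, hPval⟩ := my_indep_prod_integrable hXindep hXmeas hXint T
  refine ⟨fun x => ∏ jk ∈ T, X jk x, ?_, ?_, ?_⟩
  · have : (fun x => ∏ jk ∈ T, X jk x) = (∏ jk ∈ T, X jk) := by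
      ext x; rw [Finset.prod_apply]
    rw [this]; exact hPint
  · have : (fun x => ∏ jk ∈ T, X jk x) = (∏ jk ∈ T, X jk) := by
      ext x; rw [Finset.prod_apply]
    rw [this, hPval]
    simp [hXmean]
  · have hball : ∀ᵐ x ∂ν, ∀ jk ∈ T, B jk x = M jk x :=
      (ae_ball_iff T.countable_toSet).2 fun jk _ => hMeq jk
    filter_upwards [hball] with x hx
    exact Finset.prod_congr rfl fun jk hjk => by rw [hXdef]; simp [hx jk hjk]

/-- The general proxy weight `ω_i` of Appendix B, built from proxy transformations
`h_j, g_j, f_j` (for `j ≠ i`) and the conditional means `H_j^i, H_j^j` (`Hi, Hd`),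
`G_j^i, G_j^j` (`Gi, Gd`), `F_j^i, F_j^j` (`Fi, Fd`). -/
noncomputable def generalProxyWeight {Ω : Type*} {n : ℕ} (i : Fin n)
    (h g f : Fin n → Ω → ℝ) (Hi Hd Gi Gd Fi Fd : Fin n → ℝ) (x : Ω) : ℝ :=
  (∏ j ∈ Finset.univ.erase i,
      (h j x - Hd j) * (g j x - Gd j) / ((Hi j - Hd j) * (Gi j - Gd j)))
  + (∏ j ∈ Finset.univ.erase i,
      (f j x - Fd j) * (h j x - Hd j) / ((Fi j - Fd j) * (Hi j - Hd j)))
  + (∏ j ∈ Finset.univ.erase i,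
      (f j x - Fd j) * (g j x - Gd j) / ((Fi j - Fd j) * (Gi j - Gd j)))
  - 2 * (∏ j ∈ Finset.univ.erase i,
      (f j x - Fd j) * (h j x - Hd j) * (g j x - Gd j) /
        ((Fi j - Fd j) * (Hi j - Hd j) * (Gi j - Gd j)))

/-- Appendix B: under the conditional law `ν` given `Y = y_i`, the
general proxy weight `ω_i` is integrable with mean one. -/
theorem generalProxyWeight_integral_eq_one
    {Ω : Type*} [MeasurableSpace Ω] (ν : Measure Ω) [IsProbabilityMeasure ν]
    {n : ℕ} (hn : 2 ≤ n) (i : Fin n)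
    (h g f : Fin n → Ω → ℝ) (Hi Hd Gi Gd Fi Fd : Fin n → ℝ)
    (hH : ∀ j, j ≠ i → Hi j ≠ Hd j)
    (hG : ∀ j, j ≠ i → Gi j ≠ Gd j)
    (hF : ∀ j, j ≠ i → Fi j ≠ Fd j)
    (hint : ∀ j, j ≠ i →
      Integrable (h j) ν ∧ Integrable (g j) ν ∧ Integrable (f j) ν)
    (hindep : iIndepFun
      (fun jk : {j : Fin n // j ≠ i} × Fin 3 => ![h jk.1.1, g jk.1.1, f jk.1.1] jk.2) ν)
    (hHmean : ∀ j, j ≠ i → ∫ x, h j x ∂ν = Hi j)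
    (hGmean : ∀ j, j ≠ i → ∫ x, g j x ∂ν = Gi j)
    (hFmean : ∀ j, j ≠ i → ∫ x, f j x ∂ν = Fi j) :
    Integrable (generalProxyWeight i h g f Hi Hd Gi Gd Fi Fd) ν ∧
    ∫ x, generalProxyWeight i h g f Hi Hd Gi Gd Fi Fd x ∂ν = 1 := by
  classical
  set B : {j : Fin n // j ≠ i} × Fin 3 → Ω → ℝ :=
    fun jk => ![h jk.1.1, g jk.1.1, f jk.1.1] jk.2 with hBdef
  set d : {j : Fin n // j ≠ i} × Fin 3 → ℝ :=
    fun jk => ![Hd jk.1.1, Gd jk.1.1, Fd jk.1.1] jk.2 with hddef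
  set c : {j : Fin n // j ≠ i} × Fin 3 → ℝ :=
    fun jk => ![Hi jk.1.1 - Hd jk.1.1, Gi jk.1.1 - Gd jk.1.1, Fi jk.1.1 - Fd jk.1.1] jk.2
    with hcdef
  have hBint : ∀ jk, Integrable (B jk) ν := by
    rintro ⟨⟨j, hj⟩, k⟩
    fin_cases k
    · exact (hint j hj).1
    · exact (hint j hj).2.1
    · exact (hint j hj).2.2
  have hc : ∀ jk, c jk ≠ 0 := by
    rintro ⟨⟨j, hj⟩, k⟩
    fin_cases k
    · exact sub_ne_zero.2 (hH j hj)
    · exact sub_ne_zero.2 (hG j hj)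
    · exact sub_ne_zero.2 (hF j hj)
  have hmean : ∀ jk, ∫ x, B jk x ∂ν = d jk + c jk := by
    rintro ⟨⟨j, hj⟩, k⟩
    fin_cases k
    · simpa [hBdef, hddef, hcdef] using (hHmean j hj)
    · simpa [hBdef, hddef, hcdef] using (hGmean j hj)
    · simpa [hBdef, hddef, hcdef] using (hFmean j hj)
  obtain ⟨P1, hP1i, hP1v, hP1e⟩ := my_main_aux d c hBint hindep hc hmean
    ((univ : Finset {j : Fin n // j ≠ i}) ×ˢ ({0, 1} : Finset (Fin 3)))
  obtain ⟨P2, hP2i, hP2v, hP2e⟩ := my_main_aux d c hBint hindep hc hmean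
    ((univ : Finset {j : Fin n // j ≠ i}) ×ˢ ({2, 0} : Finset (Fin 3)))
  obtain ⟨P3, hP3i, hP3v, hP3e⟩ := my_main_aux d c hBint hindep hc hmean
    ((univ : Finset {j : Fin n // j ≠ i}) ×ˢ ({2, 1} : Finset (Fin 3)))
  obtain ⟨P4, hP4i, hP4v, hP4e⟩ := my_main_aux d c hBint hindep hc hmean
    ((univ : Finset {j : Fin n // j ≠ i}) ×ˢ ({2, 0, 1} : Finset (Fin 3)))
  have hsub : ∀ (F : Fin n → ℝ),
      ∏ j ∈ Finset.univ.erase i, F j = ∏ j : {j : Fin n // j ≠ i}, F j.1 :=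
    fun F => Finset.prod_subtype (Finset.univ.erase i) (by simp) F
  -- pointwise identities
  have hpt1 : ∀ x, (∏ j ∈ Finset.univ.erase i,
      (h j x - Hd j) * (g j x - Gd j) / ((Hi j - Hd j) * (Gi j - Gd j)))
      = ∏ jk ∈ (univ : Finset {j : Fin n // j ≠ i}) ×ˢ ({0, 1} : Finset (Fin 3)),
          (B jk x - d jk) / c jk := by
    intro x
    rw [Finset.prod_product, hsub]
    refine Finset.prod_congr rfl fun j _ => ?_
    rw [Finset.prod_pair (by decide : (0 : Fin 3) ≠ 1)]
    simp only [hBdef, hddef, hcdef, Matrix.cons_val_zero, Matrix.cons_val_one, Matrix.head_cons]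
    rw [mul_div_mul_comm]
  have hpt2 : ∀ x, (∏ j ∈ Finset.univ.erase i,
      (f j x - Fd j) * (h j x - Hd j) / ((Fi j - Fd j) * (Hi j - Hd j)))
      = ∏ jk ∈ (univ : Finset {j : Fin n // j ≠ i}) ×ˢ ({2, 0} : Finset (Fin 3)),
          (B jk x - d jk) / c jk := by
    intro x
    rw [Finset.prod_product, hsub]
    refine Finset.prod_congr rfl fun j _ => ?_
    rw [Finset.prod_pair (by decide : (2 : Fin 3) ≠ 0)]
    simp only [hBdef, hddef, hcdef, Matrix.cons_val_zero, Matrix.cons_val_one, Matrix.head_cons,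
      Matrix.cons_val_two, Matrix.tail_cons]
    rw [mul_div_mul_comm]
  have hpt3 : ∀ x, (∏ j ∈ Finset.univ.erase i,
      (f j x - Fd j) * (g j x - Gd j) / ((Fi j - Fd j) * (Gi j - Gd j)))
      = ∏ jk ∈ (univ : Finset {j : Fin n // j ≠ i}) ×ˢ ({2, 1} : Finset (Fin 3)),
          (B jk x - d jk) / c jk := by
    intro x
    rw [Finset.prod_product, hsub]
    refine Finset.prod_congr rfl fun j _ => ?_
    rw [Finset.prod_pair (by decide : (2 : Fin 3) ≠ 1)]
    simp only [hBdef, hddef, hcdef, Matrix.cons_val_zero, Matrix.cons_val_one, Matrix.head_cons,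
      Matrix.cons_val_two, Matrix.tail_cons]
    rw [mul_div_mul_comm]
  have hpt4 : ∀ x, (∏ j ∈ Finset.univ.erase i,
      (f j x - Fd j) * (h j x - Hd j) * (g j x - Gd j) /
        ((Fi j - Fd j) * (Hi j - Hd j) * (Gi j - Gd j)))
      = ∏ jk ∈ (univ : Finset {j : Fin n // j ≠ i}) ×ˢ ({2, 0, 1} : Finset (Fin 3)),
          (B jk x - d jk) / c jk := by
    intro x
    rw [Finset.prod_product, hsub]
    refine Finset.prod_congr rfl fun j _ => ?_
    rw [show ({2, 0, 1} : Finset (Fin 3)) = insert 2 {0, 1} from rfl,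
      Finset.prod_insert (by decide), Finset.prod_pair (by decide : (0 : Fin 3) ≠ 1)]
    simp only [hBdef, hddef, hcdef, Matrix.cons_val_zero, Matrix.cons_val_one, Matrix.head_cons,
      Matrix.cons_val_two, Matrix.tail_cons]
    rw [div_eq_mul_inv, div_eq_mul_inv, div_eq_mul_inv, div_eq_mul_inv, mul_inv, mul_inv]
    ring
  -- a.e. equalities of the four terms with P1..P4
  have hae1 : (fun x => ∏ j ∈ Finset.univ.erase i,
      (h j x - Hd j) * (g j x - Gd j) / ((Hi j - Hd j) * (Gi j - Gd j))) =ᵐ[ν] P1 := by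
    filter_upwards [hP1e] with x hx
    rw [hpt1 x, ← hx]
  have hae2 : (fun x => ∏ j ∈ Finset.univ.erase i,
      (f j x - Fd j) * (h j x - Hd j) / ((Fi j - Fd j) * (Hi j - Hd j))) =ᵐ[ν] P2 := by
    filter_upwards [hP2e] with x hx
    rw [hpt2 x, ← hx]
  have hae3 : (fun x => ∏ j ∈ Finset.univ.erase i,
      (f j x - Fd j) * (g j x - Gd j) / ((Fi j - Fd j) * (Gi j - Gd j))) =ᵐ[ν] P3 := by
    filter_upwards [hP3e] with x hx
    rw [hpt3 x, ← hx]
  have hae4 : (fun x => ∏ j ∈ Finset.univ.erase i,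
      (f j x - Fd j) * (h j x - Hd j) * (g j x - Gd j) /
        ((Fi j - Fd j) * (Hi j - Hd j) * (Gi j - Gd j))) =ᵐ[ν] P4 := by
    filter_upwards [hP4e] with x hx
    rw [hpt4 x, ← hx]
  have hI1 := hP1i.congr hae1.symm
  have hI2 := hP2i.congr hae2.symm
  have hI3 := hP3i.congr hae3.symm
  have hI4 := hP4i.congr hae4.symm
  have hv1 : ∫ x, (∏ j ∈ Finset.univ.erase i,
      (h j x - Hd j) * (g j x - Gd j) / ((Hi j - Hd j) * (Gi j - Gd j))) ∂ν = 1 := by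
    rw [integral_congr_ae hae1, hP1v]
  have hv2 : ∫ x, (∏ j ∈ Finset.univ.erase i,
      (f j x - Fd j) * (h j x - Hd j) / ((Fi j - Fd j) * (Hi j - Hd j))) ∂ν = 1 := by
    rw [integral_congr_ae hae2, hP2v]
  have hv3 : ∫ x, (∏ j ∈ Finset.univ.erase i,
      (f j x - Fd j) * (g j x - Gd j) / ((Fi j - Fd j) * (Gi j - Gd j))) ∂ν = 1 := by
    rw [integral_congr_ae hae3, hP3v]
  have hv4 : ∫ x, (∏ j ∈ Finset.univ.erase i,
      (f j x - Fd j) * (h j x - Hd j) * (g j x - Gd j) /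
        ((Fi j - Fd j) * (Hi j - Hd j) * (Gi j - Gd j))) ∂ν = 1 := by
    rw [integral_congr_ae hae4, hP4v]
  have hIA : Integrable (fun x => (∏ j ∈ Finset.univ.erase i,
        (h j x - Hd j) * (g j x - Gd j) / ((Hi j - Hd j) * (Gi j - Gd j))) + (∏ j ∈ Finset.univ.erase i,
        (f j x - Fd j) * (h j x - Hd j) / ((Fi j - Fd j) * (Hi j - Hd j)))) ν := hI1.add hI2
  have hIB : Integrable (fun x => ((∏ j ∈ Finset.univ.erase i,
        (h j x - Hd j) * (g j x - Gd j) / ((Hi j - Hd j) * (Gi j - Gd j))) + (∏ j ∈ Finset.univ.erase i,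
        (f j x - Fd j) * (h j x - Hd j) / ((Fi j - Fd j) * (Hi j - Hd j)))) + (∏ j ∈ Finset.univ.erase i,
        (f j x - Fd j) * (g j x - Gd j) / ((Fi j - Fd j) * (Gi j - Gd j)))) ν := hIA.add hI3
  have hIC : Integrable (fun x => 2 * (∏ j ∈ Finset.univ.erase i,
        (f j x - Fd j) * (h j x - Hd j) * (g j x - Gd j) /
          ((Fi j - Fd j) * (Hi j - Hd j) * (Gi j - Gd j)))) ν := hI4.const_mul 2
  constructor
  · exact hIB.sub hIC
  · unfold generalProxyWeight
    rw [integral_sub hIB hIC, integral_add hIA hI3, integral_add hI1 hI2,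
      integral_const_mul, hv1, hv2, hv3, hv4]
    norm_num
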